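/- arXiv:1807.04257 — 3 statements merged into one kernel-verified Lean document; each statement's English description precedes it below -/
import Mathlib

section
/- (Nonlocal maximum principle.) Assume condition (Q1) or (Q2). Let T > 0 and let u ∈ C([0,T] × ℝ^d) satisfy: ‖u(t,·) − u(0,·)‖_∞ → 0 as t → 0+; sup_{t ∈ [0,T]} ‖u(t,·) 1_{|·| ≥ r}‖_∞ → 0 as r → ∞; and for all (t,x) ∈ (0,T] × ℝ^d the equation ∂_t u(t,x) = L_x^{κ,0+} u(t,x) holds (in particular all the quantities involved are well defined). If sup_{x ∈ ℝ^d} u(0,x) ≥ 0, then for every t ∈ (0,T], sup_{x ∈ ℝ^d} u(t,x) ≤ sup_{x ∈ ℝ^d} u(0,x). -/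
open MeasureTheory Filter Set
open scoped ENNReal NNReal Topology RealInnerProductSpace

noncomputable section

/-- Euclidean space ℝ^d. -/
abbrev Ed (d : ℕ) := EuclideanSpace ℝ (Fin d)

/-- `h(r) = ∫_{ℝ^d} (1 ∧ |x|²/r²) ν(|x|) dx`. -/
def hfun (d : ℕ) (ν : ℝ → ℝ) (r : ℝ) : ℝ :=
  ∫ x : Ed d, min 1 (‖x‖ ^ 2 / r ^ 2) * ν ‖x‖

/-- generalized inverse `h⁻¹(s) = inf {r > 0 : h(r) ≤ s}`. -/
def hinv (d : ℕ) (ν : ℝ → ℝ) (s : ℝ) : ℝ :=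
  sInf {r : ℝ | 0 < r ∧ hfun d ν r ≤ s}

/-- `K(r) = r⁻² ∫_{|x|<r} |x|² ν(|x|) dx`. -/
def Kfun (d : ℕ) (ν : ℝ → ℝ) (r : ℝ) : ℝ :=
  r ^ (-2 : ℝ) * ∫ x in {x : Ed d | ‖x‖ < r}, ‖x‖ ^ 2 * ν ‖x‖

/-- the bound function `ρ_t(x) = [h⁻¹(1/t)]^{-d} ∧ (t K(|x|) |x|^{-d})`. -/
def rhoB (d : ℕ) (ν : ℝ → ℝ) (t : ℝ) (x : Ed d) : ℝ :=
  min (hinv d ν (1 / t) ^ (-(d : ℝ))) (t * Kfun d ν ‖x‖ * ‖x‖ ^ (-(d : ℝ)))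

/-- `Θ(t) = 1 + ln(1 ∨ [h⁻¹(1/t)]⁻¹)`. -/
def Theta (d : ℕ) (ν : ℝ → ℝ) (t : ℝ) : ℝ :=
  1 + Real.log (max 1 (hinv d ν (1 / t))⁻¹)

/-- `ϱ^γ_β(t,x) = [h⁻¹(1/t)]^γ (|x|^β ∧ 1) t⁻¹ ρ_t(x)`. -/
def errf (d : ℕ) (ν : ℝ → ℝ) (γ β t : ℝ) (x : Ed d) : ℝ :=
  hinv d ν (1 / t) ^ γ * min (‖x‖ ^ β) 1 * t⁻¹ * rhoB d ν t x

/-- standing assumptions on ν, including `h(0+) = ∞`. -/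
def NuOK (d : ℕ) (ν : ℝ → ℝ) : Prop :=
  Measurable ν ∧ (∀ r, 0 ≤ ν r) ∧ AntitoneOn ν (Ici 0) ∧
  Integrable (fun x : Ed d => min 1 (‖x‖ ^ 2) * ν ‖x‖) ∧
  Tendsto (hfun d ν) (𝓝[>] 0) atTop

/-- `λ_J⁻¹ ν(|x|) ≤ J(x) ≤ λ_J ν(|x|)`. -/
def JOK (d : ℕ) (ν : ℝ → ℝ) (lJ : ℝ) (J : Ed d → ℝ) : Prop :=
  1 ≤ lJ ∧ Measurable J ∧ ∀ x, lJ⁻¹ * ν ‖x‖ ≤ J x ∧ J x ≤ lJ * ν ‖x‖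

/-- weak lower scaling condition at the origin. -/
def WLSC (d : ℕ) (ν : ℝ → ℝ) (ah Ch : ℝ) : Prop :=
  ah ∈ Ioc (0 : ℝ) 2 ∧ 1 ≤ Ch ∧
  ∀ lam r : ℝ, 0 < lam → lam ≤ 1 → 0 < r → r ≤ 1 →
    hfun d ν r ≤ Ch * lam ^ ah * hfun d ν (lam * r)

/-- weak upper scaling condition at the origin. -/
def WUSC (d : ℕ) (ν : ℝ → ℝ) (bh ch : ℝ) : Prop :=
  bh ∈ Ioc (0 : ℝ) 2 ∧ ch ∈ Ioc (0 : ℝ) 1 ∧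
  ∀ lam r : ℝ, 0 < lam → lam ≤ 1 → 0 < r → r ≤ 1 →
    ch * lam ^ bh * hfun d ν (lam * r) ≤ hfun d ν r

/-- the assumptions on the coefficient κ(x,z). -/
def KapOK (d : ℕ) (ν : ℝ → ℝ) (J : Ed d → ℝ) (κf : Ed d → Ed d → ℝ)
    (κ0 κ1 κ2 κ3 κ4 β : ℝ) : Prop :=
  Measurable (Function.uncurry κf) ∧ 0 < κ0 ∧
  (∀ x z, κ0 ≤ κf x z ∧ κf x z ≤ κ1) ∧
  β ∈ Ioo (0 : ℝ) 1 ∧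
  (∀ x y z, |κf x z - κf y z| ≤ κ2 * ‖x - y‖ ^ β) ∧
  0 ≤ κ3 ∧ 0 ≤ κ4 ∧
  (∀ x : Ed d, ∀ r ∈ Ioc (0 : ℝ) 1,
    ‖∫ z in {z : Ed d | r ≤ ‖z‖ ∧ ‖z‖ < 1}, (κf x z * J z) • z‖ ≤ κ3 * (r * hfun d ν r)) ∧
  (∀ x y : Ed d, ∀ r ∈ Ioc (0 : ℝ) 1,
    ‖∫ z in {z : Ed d | r ≤ ‖z‖ ∧ ‖z‖ < 1}, ((κf x z - κf y z) * J z) • z‖ ≤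
      κ4 * ‖x - y‖ ^ β * (r * hfun d ν r))

/-- condition (Q0). -/
def Q0 (d : ℕ) (ν : ℝ → ℝ) (lJ : ℝ) (J : Ed d → ℝ) (κf : Ed d → Ed d → ℝ)
    (κ0 κ1 κ2 κ3 κ4 β ah Ch : ℝ) : Prop :=
  NuOK d ν ∧ JOK d ν lJ J ∧ KapOK d ν J κf κ0 κ1 κ2 κ3 κ4 β ∧ WLSC d ν ah Ch ∧ ah ≤ 1

/-- condition (Q1). -/
def Q1 (d : ℕ) (ν : ℝ → ℝ) (lJ : ℝ) (J : Ed d → ℝ) (κf : Ed d → Ed d → ℝ)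
    (κ0 κ1 κ2 κ3 κ4 β ah Ch : ℝ) : Prop :=
  NuOK d ν ∧ JOK d ν lJ J ∧ KapOK d ν J κf κ0 κ1 κ2 κ3 κ4 β ∧ WLSC d ν ah Ch ∧ ah = 1

/-- condition (Q2). -/
def Q2 (d : ℕ) (ν : ℝ → ℝ) (lJ : ℝ) (J : Ed d → ℝ) (κf : Ed d → Ed d → ℝ)
    (κ0 κ1 κ2 κ3 κ4 β ah Ch bh ch : ℝ) : Prop :=
  NuOK d ν ∧ JOK d ν lJ J ∧ KapOK d ν J κf κ0 κ1 κ2 κ3 κ4 β ∧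
  WLSC d ν ah Ch ∧ WUSC d ν bh ch ∧ ah ≤ bh ∧ bh < 1 ∧ 1 - ah < min β ah

/-- Kf is admissible. -/
def Admis (d : ℕ) (ν : ℝ → ℝ) (J : Ed d → ℝ) (κ0 κ1 κ3 : ℝ) (Kf : Ed d → ℝ) : Prop :=
  Measurable Kf ∧ (∀ z, κ0 ≤ Kf z ∧ Kf z ≤ κ1) ∧
  ∀ r ∈ Ioc (0 : ℝ) 1,
    ‖∫ z in {z : Ed d | r ≤ ‖z‖ ∧ ‖z‖ < 1}, (Kf z * J z) • z‖ ≤ κ3 * (r * hfun d ν r)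

/-- the Lévy–Khintchine exponent of the operator with frozen coefficient Kf. -/
def psiK (d : ℕ) (J Kf : Ed d → ℝ) (ξ : Ed d) : ℂ :=
  ∫ z : Ed d,
    (1 - Complex.exp (Complex.I * (⟪ξ, z⟫ : ℂ))
      + Complex.I * (⟪ξ, z⟫ : ℂ) * (if ‖z‖ < 1 then 1 else 0)) * ((Kf z * J z : ℝ) : ℂ)

/-- the heat kernel of L^Kf as a function of `t` and `w = y - x`. -/
def pLevy (d : ℕ) (J Kf : Ed d → ℝ) (t : ℝ) (w : Ed d) : ℝ :=
  ((2 * Real.pi) ^ d)⁻¹ *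
    (∫ ξ : Ed d,
      Complex.exp (-(Complex.I * (⟪ξ, w⟫ : ℂ)) - (t : ℂ) * psiK d J Kf ξ)).re

/-- `p^Kf(t,x,y) = p^Kf(t, y - x)`. -/
def pKer (d : ℕ) (J Kf : Ed d → ℝ) (t : ℝ) (x y : Ed d) : ℝ :=
  pLevy d J Kf t (y - x)

/-- `δ^Kf(t,x,y;z)`. -/
def deltaK (d : ℕ) (J Kf : Ed d → ℝ) (t : ℝ) (x y z : Ed d) : ℝ :=
  pKer d J Kf t (x + z) y - pKer d J Kf t x y -
    (if ‖z‖ < 1 then ⟪z, gradient (fun u => pKer d J Kf t u y) x⟫ else 0)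

/-- `L_x^{Kg} p^Kf(t,x,y) = ∫ δ^Kf(t,x,y;z) Kg(z) J(z) dz`. -/
def LKop (d : ℕ) (J Kg Kf : Ed d → ℝ) (t : ℝ) (x y : Ed d) : ℝ :=
  ∫ z : Ed d, deltaK d J Kf t x y z * (Kg z * J z)

/-- `q₀(t,x,y)`. -/
def q0f (d : ℕ) (J : Ed d → ℝ) (κf : Ed d → Ed d → ℝ) (t : ℝ) (x y : Ed d) : ℝ :=
  ∫ z : Ed d, deltaK d J (κf y) t x y z * ((κf x z - κf y z) * J z)

/-- `q_n(t,x,y)`. -/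
def qnf (d : ℕ) (J : Ed d → ℝ) (κf : Ed d → Ed d → ℝ) : ℕ → ℝ → Ed d → Ed d → ℝ
  | 0 => q0f d J κf
  | n + 1 => fun t x y =>
      ∫ s in Ioo (0 : ℝ) t, ∫ z : Ed d, q0f d J κf (t - s) x z * qnf d J κf n s z y

/-- `q(t,x,y) = Σ_n q_n(t,x,y)`. -/
def qf (d : ℕ) (J : Ed d → ℝ) (κf : Ed d → Ed d → ℝ) (t : ℝ) (x y : Ed d) : ℝ :=
  ∑' n : ℕ, qnf d J κf n t x y

/-- the parametrix heat kernel `p^κ(t,x,y)`. -/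
def pkap (d : ℕ) (J : Ed d → ℝ) (κf : Ed d → Ed d → ℝ) (t : ℝ) (x y : Ed d) : ℝ :=
  pKer d J (κf y) t x y +
    ∫ s in Ioo (0 : ℝ) t, ∫ z : Ed d, pKer d J (κf z) (t - s) x z * qf d J κf s z y

/-- the integral defining `L^{κ,ε} f(x)` (over `{|z| > ε}`; `ε = 0` gives `L^κ`). -/
def Lint (d : ℕ) (J : Ed d → ℝ) (κf : Ed d → Ed d → ℝ) (ε : ℝ) (f : Ed d → ℝ) (x : Ed d) : ℝ :=
  ∫ z in {z : Ed d | ε < ‖z‖},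
    (f (x + z) - f x - (if ‖z‖ < 1 then ⟪z, gradient f x⟫ else 0)) * (κf x z * J z)

/-- `L^{κ,ε} f(x)` is well defined. -/
def LintDef (d : ℕ) (J : Ed d → ℝ) (κf : Ed d → Ed d → ℝ) (ε : ℝ) (f : Ed d → ℝ)
    (x : Ed d) : Prop :=
  DifferentiableAt ℝ f x ∧
  IntegrableOn (fun z : Ed d =>
      (f (x + z) - f x - (if ‖z‖ < 1 then ⟪z, gradient f x⟫ else 0)) * (κf x z * J z))
    {z : Ed d | ε < ‖z‖}

/-- `L^{κ,0+} f(x)` is well defined with value `A`. -/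
def L0plus (d : ℕ) (J : Ed d → ℝ) (κf : Ed d → Ed d → ℝ) (f : Ed d → ℝ) (x : Ed d)
    (A : ℝ) : Prop :=
  (∀ ε ∈ Ioc (0 : ℝ) 1, LintDef d J κf ε f x) ∧
  Tendsto (fun ε => Lint d J κf ε f x) (𝓝[>] 0) (𝓝 A)

/-- iterated coordinate partial derivatives: `∂^𝛃` for the multi-index recorded by a list. -/
def pdList (d : ℕ) : List (Fin d) → (Ed d → ℝ) → Ed d → ℝ
  | [], f => f
  | i :: l, f => fun x => fderiv ℝ (pdList d l f) x (EuclideanSpace.single i 1)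


/-- Theorem 5.1: nonlocal maximum principle. -/
theorem statement_16
    (d : ℕ) (hd : 0 < d) (ν : ℝ → ℝ) (lJ : ℝ) (J : Ed d → ℝ) (κf : Ed d → Ed d → ℝ)
    (κ0 κ1 κ2 κ3 κ4 β ah Ch bh ch T : ℝ)
    (hQ : Q1 d ν lJ J κf κ0 κ1 κ2 κ3 κ4 β ah Ch ∨
          Q2 d ν lJ J κf κ0 κ1 κ2 κ3 κ4 β ah Ch bh ch)
    (hT : 0 < T) (u : ℝ → Ed d → ℝ)
    (hu_cont : ContinuousOn (fun q : ℝ × Ed d => u q.1 q.2) {q | q.1 ∈ Icc (0 : ℝ) T})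
    (hu_init : ∀ ε > (0 : ℝ), ∃ δ > (0 : ℝ), ∀ t ∈ Ioc (0 : ℝ) T, t < δ →
      ∀ x : Ed d, |u t x - u 0 x| < ε)
    (hu_inf : ∀ ε > (0 : ℝ), ∃ R : ℝ, ∀ t ∈ Icc (0 : ℝ) T, ∀ x : Ed d, R ≤ ‖x‖ → |u t x| < ε)
    (hu_eq : ∀ t ∈ Ioc (0 : ℝ) T, ∀ x : Ed d, ∃ A : ℝ,
      L0plus d J κf (fun x' => u t x') x A ∧ HasDerivAt (fun s => u s x) A t)
    (h0 : 0 ≤ ⨆ x : Ed d, u 0 x) :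
    ∀ t ∈ Ioc (0 : ℝ) T, ∀ x : Ed d, u t x ≤ ⨆ x' : Ed d, u 0 x' := by
  -- basic structural facts from (Q1) or (Q2)
  have hbase : NuOK d ν ∧ JOK d ν lJ J ∧ KapOK d ν J κf κ0 κ1 κ2 κ3 κ4 β := by
    rcases hQ with h | h
    · exact ⟨h.1, h.2.1, h.2.2.1⟩
    · exact ⟨h.1, h.2.1, h.2.2.1⟩
  obtain ⟨hν, hJ, hκ⟩ := hbase
  have hνnn : ∀ r, 0 ≤ ν r := hν.2.1
  have hJnn : ∀ z : Ed d, 0 ≤ J z := by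
    intro z
    have h1 := (hJ.2.2 z).1
    have hlJ : (0:ℝ) < lJ := lt_of_lt_of_le one_pos hJ.1
    have h2 : 0 ≤ lJ⁻¹ * ν ‖z‖ := mul_nonneg (inv_nonneg.2 hlJ.le) (hνnn _)
    linarith
  have hκJnn : ∀ x z : Ed d, 0 ≤ κf x z * J z := fun x z =>
    mul_nonneg (le_trans hκ.2.1.le (hκ.2.2.1 x z).1) (hJnn z)
  set M := ⨆ x : Ed d, u 0 x with hM
  -- u 0 is bounded above by M
  have hcont0 : Continuous (fun x : Ed d => u 0 x) := by
    have hc : Continuous (fun x : Ed d => ((0:ℝ), x)) := by continuity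
    exact hu_cont.comp_continuous hc (fun x => by simp [hT.le])
  obtain ⟨R1, hR1⟩ := hu_inf 1 one_pos
  obtain ⟨xm, hxm, hxmax⟩ := (isCompact_closedBall (0:Ed d) (max R1 0)).exists_isMaxOn
    ⟨0, by simp [le_max_right]⟩ hcont0.continuousOn
  have hbdd : BddAbove (Set.range fun x : Ed d => u 0 x) := by
    refine ⟨max (u 0 xm) 1, ?_⟩
    rintro _ ⟨x, rfl⟩
    by_cases hx : ‖x‖ ≤ max R1 0
    · exact le_max_of_le_left (hxmax (by simpa [Metric.mem_closedBall, dist_eq_norm] using hx))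
    · have hx' := hR1 0 ⟨le_refl 0, hT.le⟩ x (le_trans (le_max_left _ _) (not_le.1 hx).le)
      exact le_max_of_le_right (le_of_lt (lt_of_le_of_lt (le_abs_self _) hx'))
  have hle0 : ∀ x : Ed d, u 0 x ≤ M := fun x => le_ciSup hbdd x
  intro t₀ ht₀ x₀
  by_contra hcon
  push_neg at hcon
  set c := u t₀ x₀ - M with hc
  have hcpos : 0 < c := sub_pos.2 hcon
  set η := c / (2 * T) with hη
  have hηpos : 0 < η := div_pos hcpos (by linarith)
  have hηT : η * T = c / 2 := by
    rw [hη]; field_simp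
  obtain ⟨R, hR⟩ := hu_inf (c/4) (by linarith)
  set R' := max R ‖x₀‖ with hR'
  have hwx0 : M + c/2 ≤ u t₀ x₀ - η * t₀ := by
    have h1 : η * t₀ ≤ η * T := mul_le_mul_of_nonneg_left ht₀.2 hηpos.le
    have h2 : u t₀ x₀ = M + c := by rw [hc]; ring
    linarith
  -- maximum over the compact set
  set K : Set (ℝ × Ed d) := Icc (0:ℝ) T ×ˢ Metric.closedBall (0:Ed d) R' with hK
  have hKsub : K ⊆ {q : ℝ × Ed d | q.1 ∈ Icc (0:ℝ) T} := fun q hq => hq.1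
  have hKc : IsCompact K := isCompact_Icc.prod (isCompact_closedBall _ _)
  have hmem : ((t₀, x₀) : ℝ × Ed d) ∈ K :=
    ⟨⟨ht₀.1.le, ht₀.2⟩, by simp [Metric.mem_closedBall, dist_eq_norm, hR', le_max_right]⟩
  have hwcont : ContinuousOn (fun q : ℝ × Ed d => u q.1 q.2 - η * q.1) K :=
    (hu_cont.mono hKsub).sub (continuous_const.mul continuous_fst).continuousOn
  obtain ⟨q, hqK, hqmax⟩ := hKc.exists_isMaxOn ⟨(t₀, x₀), hmem⟩ hwcont
  have hq1 : q.1 ∈ Icc (0:ℝ) T := hqK.1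
  have hwq : u t₀ x₀ - η * t₀ ≤ u q.1 q.2 - η * q.1 := isMaxOn_iff.1 hqmax (t₀, x₀) hmem
  -- q is a global maximum
  have hglob : ∀ t ∈ Icc (0:ℝ) T, ∀ x : Ed d,
      u t x - η * t ≤ u q.1 q.2 - η * q.1 := by
    intro t ht x
    by_cases hx : ‖x‖ ≤ R'
    · exact isMaxOn_iff.1 hqmax (t, x) ⟨ht, by simpa [Metric.mem_closedBall, dist_eq_norm] using hx⟩
    · have h1 : |u t x| < c/4 := hR t ht x (le_trans (le_max_left _ _) (not_le.1 hx).le)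
      have h2 : u t x ≤ |u t x| := le_abs_self _
      have h3 : 0 ≤ η * t := mul_nonneg hηpos.le ht.1
      linarith
  have htpos : 0 < q.1 := by
    rcases lt_or_eq_of_le hq1.1 with h | h
    · exact h
    · exfalso
      have h1 := hglob t₀ ⟨ht₀.1.le, ht₀.2⟩ x₀
      have h2 := hle0 q.2
      rw [h] at h2
      have h3 : η * q.1 = 0 := by rw [← h]; ring
      linarith
  obtain ⟨A, hL0, hD⟩ := hu_eq q.1 ⟨htpos, hq1.2⟩ q.2
  -- the time derivative at the maximum is at least η
  have hAη : η ≤ A := by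
    have hslope := hasDerivAt_iff_tendsto_slope.1 hD
    have hslope' : Tendsto (slope (fun s => u s q.2) q.1) (𝓝[<] q.1) (𝓝 A) :=
      hslope.mono_left (nhdsWithin_mono _ (fun s hs => ne_of_lt hs))
    refine ge_of_tendsto hslope' ?_
    filter_upwards [Ioo_mem_nhdsLT_of_mem ⟨htpos, le_refl q.1⟩] with s hs
    have hws := hglob s ⟨hs.1.le, le_trans hs.2.le hq1.2⟩ q.2
    rw [slope_def_field, le_div_iff_of_neg (by linarith [hs.2] : s - q.1 < 0)]
    nlinarith [hws, hs.2]
  -- the nonlocal operator is nonpositive at the spatial maximum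
  have hmaxx : ∀ x : Ed d, u q.1 x ≤ u q.1 q.2 := by
    intro x
    have h1 := hglob q.1 hq1 x
    linarith
  have hdiff : DifferentiableAt ℝ (fun x' => u q.1 x') q.2 :=
    (hL0.1 1 ⟨one_pos, le_refl 1⟩).1
  have hfd : fderiv ℝ (fun x' => u q.1 x') q.2 = 0 :=
    IsLocalMax.fderiv_eq_zero (Filter.Eventually.of_forall hmaxx)
  have hgrad : gradient (fun x' => u q.1 x') q.2 = 0 := by
    rw [gradient, hfd, map_zero]
  have hLle : ∀ ε ∈ Ioc (0:ℝ) 1, Lint d J κf ε (fun x' => u q.1 x') q.2 ≤ 0 := by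
    intro ε hε
    rw [Lint]
    apply setIntegral_nonpos_of_ae
    apply Filter.Eventually.of_forall
    intro z
    have h1 : u q.1 (q.2 + z) - u q.1 q.2 -
        (if ‖z‖ < 1 then (⟪z, gradient (fun x' => u q.1 x') q.2⟫ : ℝ) else 0) ≤ 0 := by
      rw [hgrad]
      have h2 := hmaxx (q.2 + z)
      split_ifs <;> simp <;> linarith
    exact mul_nonpos_of_nonpos_of_nonneg h1 (hκJnn q.2 z)
  have hA0 : A ≤ 0 := by
    refine le_of_tendsto hL0.2 ?_
    filter_upwards [Ioc_mem_nhdsGT one_pos] with ε hε using hLle ε hε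
  linarith


end
end

section
/- Assume condition (Q1) or (Q2), and let T > 0. If u₁, u₂ ∈ C([0,T] × ℝ^d) both satisfy: ‖u_i(t,·) − u_i(0,·)‖_∞ → 0 as t → 0+; sup_{t ∈ [0,T]} ‖u_i(t,·) 1_{|·| ≥ r}‖_∞ → 0 as r → ∞; and ∂_t u_i(t,x) = L_x^{κ,0+} u_i(t,x) for all (t,x) ∈ (0,T] × ℝ^d; and if u₁(0,x) = u₂(0,x) for all x ∈ ℝ^d, then u₁ ≡ u₂ on [0,T] × ℝ^d. -/
open MeasureTheory Filter Set
open scoped ENNReal NNReal Topology RealInnerProductSpace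

noncomputable section

/-! Weak maximum principle. If `u₁ - u₂ = c > 0` at some time `s`, then
`W = u₁ - u₂ - c t / (2 s)` attains a positive maximum on `[0,T] × ℝ^d`, since both solutions vanish
at infinity, and not at `t = 0`, where `W` vanishes. At that point the jump kernel is nonnegative, so
every `L^{κ,ε}` is monotone there and `∂ₜ(u₁ - u₂) = L^{κ,0+}(u₁ - u₂) ≤ 0`, whereas maximality in
time gives `∂ₜ(u₁ - u₂) ≥ c / (2 s) > 0`. -/

lemma JOK.nonneg {d : ℕ} {ν : ℝ → ℝ} {lJ : ℝ} {J : Ed d → ℝ} (hJ : JOK d ν lJ J)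
    (hν : ∀ r, 0 ≤ ν r) (z : Ed d) : 0 ≤ J z :=
  (mul_nonneg (inv_nonneg.2 (zero_le_one.trans hJ.1)) (hν ‖z‖)).trans (hJ.2.2 z).1

lemma KapOK.mul_nonneg {d : ℕ} {ν : ℝ → ℝ} {lJ : ℝ} {J : Ed d → ℝ} {κf : Ed d → Ed d → ℝ}
    {κ0 κ1 κ2 κ3 κ4 β : ℝ} (hκ : KapOK d ν J κf κ0 κ1 κ2 κ3 κ4 β) (hJ : JOK d ν lJ J)
    (hν : ∀ r, 0 ≤ ν r) (x z : Ed d) : 0 ≤ κf x z * J z :=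
  _root_.mul_nonneg (hκ.2.1.le.trans (hκ.2.2.1 x z).1) (hJ.nonneg hν z)

lemma HasDerivAt.nonneg_of_isMaxOn_Icc {f : ℝ → ℝ} {f' a b : ℝ} (hab : a < b)
    (hf : HasDerivAt f f' b) (hmax : IsMaxOn f (Icc a b) b) : 0 ≤ f' := by
  have hcone : a - b ∈ posTangentConeAt (Icc a b) b :=
    sub_mem_posTangentConeAt_of_segment_subset ((segment_symm ℝ b a).subset.trans
      (segment_subset_Icc hab.le))
  have h := hmax.localize.hasFDerivWithinAt_nonpos hf.hasFDerivAt.hasFDerivWithinAt hcone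
  simp only [ContinuousLinearMap.toSpanSingleton_apply, smul_eq_mul] at h
  exact nonneg_of_mul_nonpos_right h (sub_neg.2 hab)

lemma ContinuousOn.exists_isMaxOn_of_le_of_norm_ge {E : Type*} [NormedAddCommGroup E]
    [ProperSpace E] {F : ℝ × E → ℝ} {a b R : ℝ} {q₁ : ℝ × E}
    (hF : ContinuousOn F {q | q.1 ∈ Icc a b}) (hq₁ : q₁.1 ∈ Icc a b)
    (hfar : ∀ q : ℝ × E, q.1 ∈ Icc a b → R ≤ ‖q.2‖ → F q ≤ F q₁) :
    ∃ q₀ : ℝ × E, q₀.1 ∈ Icc a b ∧ IsMaxOn F {q | q.1 ∈ Icc a b} q₀ := by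
  refine hF.exists_isMaxOn' (isClosed_Icc.preimage continuous_fst) hq₁ ?_
  rw [eventually_inf_principal]
  refine mem_cocompact.2 ⟨Icc a b ×ˢ Metric.closedBall 0 R,
    isCompact_Icc.prod (isCompact_closedBall _ _), fun q hq hqab => hfar q hqab ?_⟩
  have : ¬‖q.2‖ ≤ R := fun h => hq ⟨hqab, mem_closedBall_zero_iff.2 h⟩
  exact (not_le.1 this).le

section MaximumPrinciple

variable {d : ℕ} {J : Ed d → ℝ} {κf : Ed d → Ed d → ℝ}

lemma Lint_le_of_isMaxOn_sub {ε : ℝ} {f g : Ed d → ℝ} {x : Ed d}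
    (hκJ : ∀ z, 0 ≤ κf x z * J z) (hf : LintDef d J κf ε f x) (hg : LintDef d J κf ε g x)
    (hmax : IsMaxOn (f - g) univ x) : Lint d J κf ε f x ≤ Lint d J κf ε g x := by
  have hgrad : gradient f x = gradient g x := by
    have h := (hmax.isLocalMax univ_mem).fderiv_eq_zero
    rw [fderiv_sub hf.1 hg.1, sub_eq_zero] at h
    simp only [gradient, h]
  refine setIntegral_mono_on hf.2 hg.2 (measurableSet_lt measurable_const measurable_norm)
    fun z _ => mul_le_mul_of_nonneg_right ?_ (hκJ z)
  have : f (x + z) - g (x + z) ≤ f x - g x := hmax (mem_univ _)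
  rw [hgrad]
  linarith

lemma L0plus_le_of_isMaxOn_sub {f g : Ed d → ℝ} {x : Ed d} {A B : ℝ}
    (hκJ : ∀ z, 0 ≤ κf x z * J z) (hf : L0plus d J κf f x A) (hg : L0plus d J κf g x B)
    (hmax : IsMaxOn (f - g) univ x) : A ≤ B :=
  le_of_tendsto_of_tendsto hf.2 hg.2 <| mem_of_superset (Ioc_mem_nhdsGT one_pos)
    fun ε hε => Lint_le_of_isMaxOn_sub hκJ (hf.1 ε hε) (hg.1 ε hε) hmax

lemma not_isMaxOn_sub_sub_mul_time {u₁ u₂ : ℝ → Ed d → ℝ} {ε T t₀ : ℝ} {x₀ : Ed d}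
    (hκJ : ∀ z, 0 ≤ κf x₀ z * J z) (hε : 0 < ε) (ht₀ : t₀ ∈ Ioc 0 T)
    (h₁ : ∃ A, L0plus d J κf (u₁ t₀) x₀ A ∧ HasDerivAt (fun s => u₁ s x₀) A t₀)
    (h₂ : ∃ A, L0plus d J κf (u₂ t₀) x₀ A ∧ HasDerivAt (fun s => u₂ s x₀) A t₀) :
    ¬ IsMaxOn (fun q : ℝ × Ed d => u₁ q.1 q.2 - u₂ q.1 q.2 - ε * q.1)
      {q | q.1 ∈ Icc 0 T} (t₀, x₀) := by
  intro hmax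
  obtain ⟨A₁, hL₁, hD₁⟩ := h₁
  obtain ⟨A₂, hL₂, hD₂⟩ := h₂
  have hspace : A₁ ≤ A₂ := by
    refine L0plus_le_of_isMaxOn_sub hκJ hL₁ hL₂ fun x _ => ?_
    have : u₁ t₀ x - u₂ t₀ x - ε * t₀ ≤ u₁ t₀ x₀ - u₂ t₀ x₀ - ε * t₀ :=
      hmax (show (t₀, x) ∈ {q : ℝ × Ed d | q.1 ∈ Icc 0 T} from ⟨ht₀.1.le, ht₀.2⟩)
    change u₁ t₀ x - u₂ t₀ x ≤ u₁ t₀ x₀ - u₂ t₀ x₀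
    linarith
  have htime : 0 ≤ A₁ - A₂ - ε * 1 :=
    ((hD₁.sub hD₂).sub ((hasDerivAt_id t₀).const_mul ε)).nonneg_of_isMaxOn_Icc ht₀.1
      fun s hs => hmax (show (s, x₀) ∈ {q : ℝ × Ed d | q.1 ∈ Icc 0 T} from
        ⟨hs.1, hs.2.trans ht₀.2⟩)
  linarith

def IsDecayingSolution (d : ℕ) (J : Ed d → ℝ) (κf : Ed d → Ed d → ℝ) (T : ℝ)
    (u : ℝ → Ed d → ℝ) : Prop :=
  ContinuousOn (fun q : ℝ × Ed d => u q.1 q.2) {q | q.1 ∈ Icc (0 : ℝ) T} ∧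
  (∀ ε > (0 : ℝ), ∃ R : ℝ, ∀ t ∈ Icc (0 : ℝ) T, ∀ x : Ed d, R ≤ ‖x‖ → |u t x| < ε) ∧
  ∀ t ∈ Ioc (0 : ℝ) T, ∀ x : Ed d, ∃ A : ℝ,
    L0plus d J κf (fun x' => u t x') x A ∧ HasDerivAt (fun s => u s x) A t

lemma IsDecayingSolution.le_of_eq_at_zero {T : ℝ} {u₁ u₂ : ℝ → Ed d → ℝ}
    (hκJ : ∀ x z, 0 ≤ κf x z * J z) (h₁ : IsDecayingSolution d J κf T u₁)
    (h₂ : IsDecayingSolution d J κf T u₂) (h0 : ∀ x, u₁ 0 x = u₂ 0 x) :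
    ∀ t ∈ Icc (0 : ℝ) T, ∀ x, u₁ t x ≤ u₂ t x := by
  by_contra! ⟨ts, hts, xs, hlt⟩
  set c := u₁ ts xs - u₂ ts xs with hc_def
  have hc : 0 < c := sub_pos.2 hlt
  have hts0 : 0 < ts := hts.1.lt_of_ne fun h => by simp [← h, h0] at hlt
  set W : ℝ × Ed d → ℝ := fun q => u₁ q.1 q.2 - u₂ q.1 q.2 - c / (2 * ts) * q.1
  have hWs : W (ts, xs) = c / 2 := by simp only [W, ← hc_def]; field_simp; ring
  obtain ⟨R₁, hR₁⟩ := h₁.2.1 (c / 4) (by positivity)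
  obtain ⟨R₂, hR₂⟩ := h₂.2.1 (c / 4) (by positivity)
  have hfar : ∀ q : ℝ × Ed d, q.1 ∈ Icc 0 T → max R₁ R₂ ≤ ‖q.2‖ → W q ≤ W (ts, xs) := by
    intro q hq hR
    have hu₁ := abs_lt.1 (hR₁ q.1 hq q.2 ((le_max_left _ _).trans hR))
    have hu₂ := abs_lt.1 (hR₂ q.1 hq q.2 ((le_max_right _ _).trans hR))
    have : 0 ≤ c / (2 * ts) * q.1 := by have := hq.1; positivity
    simp only [hWs, W]
    linarith
  obtain ⟨⟨t₀, x₀⟩, ht₀, hmax⟩ :=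
    (h₁.1.sub h₂.1 |>.sub (by fun_prop)).exists_isMaxOn_of_le_of_norm_ge hts hfar
  have ht₀0 : 0 < t₀ := by
    refine ht₀.1.lt_of_ne fun h => ?_
    have : W (ts, xs) ≤ W (0, x₀) := h ▸ hmax hts
    simp only [hWs, W, h0, sub_self, mul_zero] at this
    linarith
  exact not_isMaxOn_sub_sub_mul_time (hκJ x₀) (by positivity) ⟨ht₀0, ht₀.2⟩
    (h₁.2.2 t₀ ⟨ht₀0, ht₀.2⟩ x₀) (h₂.2.2 t₀ ⟨ht₀0, ht₀.2⟩ x₀) hmax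

end MaximumPrinciple

theorem statement_17_general
    (d : ℕ) (ν : ℝ → ℝ) (lJ : ℝ) (J : Ed d → ℝ) (κf : Ed d → Ed d → ℝ)
    (κ0 κ1 κ2 κ3 κ4 β ah Ch bh ch T : ℝ)
    (hQ : Q1 d ν lJ J κf κ0 κ1 κ2 κ3 κ4 β ah Ch ∨
          Q2 d ν lJ J κf κ0 κ1 κ2 κ3 κ4 β ah Ch bh ch)
    (u₁ u₂ : ℝ → Ed d → ℝ)
    (hu_cont : ∀ u ∈ ({u₁, u₂} : Set (ℝ → Ed d → ℝ)),
      ContinuousOn (fun q : ℝ × Ed d => u q.1 q.2) {q | q.1 ∈ Icc (0 : ℝ) T})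
    (hu_inf : ∀ u ∈ ({u₁, u₂} : Set (ℝ → Ed d → ℝ)),
      ∀ ε > (0 : ℝ), ∃ R : ℝ, ∀ t ∈ Icc (0 : ℝ) T, ∀ x : Ed d, R ≤ ‖x‖ → |u t x| < ε)
    (hu_eq : ∀ u ∈ ({u₁, u₂} : Set (ℝ → Ed d → ℝ)),
      ∀ t ∈ Ioc (0 : ℝ) T, ∀ x : Ed d, ∃ A : ℝ,
        L0plus d J κf (fun x' => u t x') x A ∧ HasDerivAt (fun s => u s x) A t)
    (h0 : ∀ x : Ed d, u₁ 0 x = u₂ 0 x) :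
    ∀ t ∈ Icc (0 : ℝ) T, ∀ x : Ed d, u₁ t x = u₂ t x := by
  have hκJ : ∀ x z, 0 ≤ κf x z * J z := by
    rcases hQ with ⟨hν, hJ, hκ, -⟩ | ⟨hν, hJ, hκ, -⟩ <;> exact hκ.mul_nonneg hJ hν.2.1
  have hsol : ∀ u ∈ ({u₁, u₂} : Set (ℝ → Ed d → ℝ)), IsDecayingSolution d J κf T u :=
    fun u hu => ⟨hu_cont u hu, hu_inf u hu, hu_eq u hu⟩
  have hsol₁ := hsol u₁ (by simp)
  have hsol₂ := hsol u₂ (by simp)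
  exact fun t ht x => le_antisymm (hsol₁.le_of_eq_at_zero hκJ hsol₂ h0 t ht x)
    (hsol₂.le_of_eq_at_zero hκJ hsol₁ (fun x => (h0 x).symm) t ht x)

/-- Corollary 5.2: uniqueness from the nonlocal maximum principle. -/
theorem statement_17
    (d : ℕ) (hd : 0 < d) (ν : ℝ → ℝ) (lJ : ℝ) (J : Ed d → ℝ) (κf : Ed d → Ed d → ℝ)
    (κ0 κ1 κ2 κ3 κ4 β ah Ch bh ch T : ℝ)
    (hQ : Q1 d ν lJ J κf κ0 κ1 κ2 κ3 κ4 β ah Ch ∨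
          Q2 d ν lJ J κf κ0 κ1 κ2 κ3 κ4 β ah Ch bh ch)
    (hT : 0 < T) (u₁ u₂ : ℝ → Ed d → ℝ)
    (hu_cont : ∀ u ∈ ({u₁, u₂} : Set (ℝ → Ed d → ℝ)),
      ContinuousOn (fun q : ℝ × Ed d => u q.1 q.2) {q | q.1 ∈ Icc (0 : ℝ) T})
    (hu_init : ∀ u ∈ ({u₁, u₂} : Set (ℝ → Ed d → ℝ)),
      ∀ ε > (0 : ℝ), ∃ δ > (0 : ℝ), ∀ t ∈ Ioc (0 : ℝ) T, t < δ →
        ∀ x : Ed d, |u t x - u 0 x| < ε)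
    (hu_inf : ∀ u ∈ ({u₁, u₂} : Set (ℝ → Ed d → ℝ)),
      ∀ ε > (0 : ℝ), ∃ R : ℝ, ∀ t ∈ Icc (0 : ℝ) T, ∀ x : Ed d, R ≤ ‖x‖ → |u t x| < ε)
    (hu_eq : ∀ u ∈ ({u₁, u₂} : Set (ℝ → Ed d → ℝ)),
      ∀ t ∈ Ioc (0 : ℝ) T, ∀ x : Ed d, ∃ A : ℝ,
        L0plus d J κf (fun x' => u t x') x A ∧ HasDerivAt (fun s => u s x) A t)
    (h0 : ∀ x : Ed d, u₁ 0 x = u₂ 0 x) :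
    ∀ t ∈ Icc (0 : ℝ) T, ∀ x : Ed d, u₁ t x = u₂ t x :=
  statement_17_general d ν lJ J κf κ0 κ1 κ2 κ3 κ4 β ah Ch bh ch T hQ u₁ u₂ hu_cont hu_inf hu_eq h0
end
end

section
/- Assume (WLSC) (with the scaling inequality for λ ≤ 1, r ≤ 1). Let k, l ≥ 0 and θ, η, β, γ ∈ ℝ satisfy (β/2) ∧ (β/α_h) + 1 − θ > 0 and (γ/2) ∧ (γ/α_h) + 1 − η > 0. For every T > 0 there exists a constant c > 0 (depending only on α_h, C_h, h^{−1}(1/T) ∨ 1, θ, η, β, γ, k, l) such that for all t ∈ (0,T], ∫_0^t [Θ(u)]^l u^{−η} [h^{−1}(1/u)]^γ [Θ(t−u)]^k (t−u)^{−θ} [h^{−1}(1/(t−u))]^β du ≤ c [Θ(t)]^{l+k} t^{1−η−θ} [h^{−1}(1/t)]^{γ+β}. Moreover, Θ(t/2) ≤ c Θ(t) for t ∈ (0,T]. -/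
open MeasureTheory Filter Set
open scoped ENNReal NNReal Topology RealInnerProductSpace

noncomputable section

/-!
For `0 < u ≤ t ≤ T`, the bound `h(λr) ≤ λ⁻² h(r)` gives `h⁻¹(1/u) ≤ (u/t)^{1/2} h⁻¹(1/t)`, and
(WLSC) gives `c (u/t)^{1/α_h} h⁻¹(1/t) ≤ h⁻¹(1/u)` with `c` uniform in `t ≤ T`; taking logarithms,
`Θ(u) ≤ C_ε (t/u)^ε Θ(t)` for every `ε > 0`. Choosing `ε` small, each factor of the integrand is at
most a constant times `Θ(t)^l [h⁻¹(1/t)]^γ t^{-η-p} u^p` with `p > -1`, and the integral reduces to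
`∫₀ᵗ u^p (t-u)^q du ≤ K t^{p+q+1}`.
-/

open Real

section hfun

variable {d : ℕ} {ν : ℝ → ℝ}

lemma min_one_mul_le {b c : ℝ} (hc : 1 ≤ c) : min 1 (c * b) ≤ c * min 1 b := by
  rw [mul_min_of_nonneg _ _ (zero_le_one.trans hc), mul_one]
  exact min_le_min_right _ hc

lemma integrable_hfun_integrand (hν : NuOK d ν) {r : ℝ} (hr : 0 < r) :
    Integrable (fun x : Ed d => min 1 (‖x‖ ^ 2 / r ^ 2) * ν ‖x‖) := by
  have hmeas := hν.1
  refine (hν.2.2.2.1.const_mul (max 1 (r ^ 2)⁻¹)).mono' (by fun_prop)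
    (ae_of_all _ fun x => ?_)
  have hx : min 1 (‖x‖ ^ 2 / r ^ 2) ≤ max 1 (r ^ 2)⁻¹ * min 1 (‖x‖ ^ 2) :=
    calc min 1 (‖x‖ ^ 2 / r ^ 2) ≤ min 1 (max 1 (r ^ 2)⁻¹ * ‖x‖ ^ 2) := by
          rw [div_eq_inv_mul]; gcongr; exact le_max_right _ _
      _ ≤ _ := min_one_mul_le (le_max_left _ _)
  rw [Real.norm_eq_abs, abs_of_nonneg (mul_nonneg (by positivity) (hν.2.1 _)), ← mul_assoc]
  exact mul_le_mul_of_nonneg_right hx (hν.2.1 _)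

lemma antitoneOn_hfun (hν : NuOK d ν) : AntitoneOn (hfun d ν) (Ioi 0) := by
  intro r (hr : 0 < r) r' (hr' : 0 < r') hrr'
  refine integral_mono (integrable_hfun_integrand hν hr') (integrable_hfun_integrand hν hr)
    fun x => mul_le_mul_of_nonneg_right ?_ (hν.2.1 _)
  gcongr

lemma hfun_mul_le (hν : NuOK d ν) {lam r : ℝ} (hlam : 0 < lam) (hlam1 : lam ≤ 1) (hr : 0 < r) :
    hfun d ν (lam * r) ≤ (lam ^ 2)⁻¹ * hfun d ν r := by
  rw [hfun, hfun, ← integral_const_mul]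
  refine integral_mono (integrable_hfun_integrand hν (mul_pos hlam hr))
    ((integrable_hfun_integrand hν hr).const_mul _) fun x => ?_
  rw [← mul_assoc]
  refine mul_le_mul_of_nonneg_right ?_ (hν.2.1 _)
  have hx : ‖x‖ ^ 2 / (lam * r) ^ 2 = (lam ^ 2)⁻¹ * (‖x‖ ^ 2 / r ^ 2) := by
    field_simp
  rw [hx]
  exact min_one_mul_le (one_le_inv₀ (by positivity) |>.2 (pow_le_one₀ hlam.le hlam1))

lemma tendsto_hfun_atTop (hν : NuOK d ν) : Tendsto (hfun d ν) atTop (𝓝 0) := by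
  change Tendsto (fun r => hfun d ν r) _ _
  simp only [hfun]
  have hmeas := hν.1
  have h := tendsto_integral_filter_of_dominated_convergence (μ := volume) (l := atTop)
    (F := fun r (x : Ed d) => min 1 (‖x‖ ^ 2 / r ^ 2) * ν ‖x‖) (f := fun _ => 0)
    (fun x => min 1 (‖x‖ ^ 2) * ν ‖x‖) (Eventually.of_forall fun r => by fun_prop)
    ((eventually_ge_atTop 1).mono fun r hr => ae_of_all _ fun x => ?_) hν.2.2.2.1
    (ae_of_all _ fun x => ?_)
  · simpa using h
  · rw [Real.norm_eq_abs, abs_of_nonneg (mul_nonneg (by positivity) (hν.2.1 _))]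
    refine mul_le_mul_of_nonneg_right (min_le_min_left _ ?_) (hν.2.1 _)
    exact div_le_self (sq_nonneg _) (one_le_pow₀ hr)
  · have h0 : Tendsto (fun r : ℝ => ‖x‖ ^ 2 / r ^ 2) atTop (𝓝 0) :=
      tendsto_const_nhds.div_atTop (tendsto_pow_atTop two_ne_zero)
    have hmin : Continuous fun y : ℝ => min 1 y := continuous_const.min continuous_id
    simpa using ((hmin.tendsto 0).comp h0).mul_const (ν ‖x‖)

lemma exists_hfun_le (hν : NuOK d ν) {s : ℝ} (hs : 0 < s) : ∃ r, 0 < r ∧ hfun d ν r ≤ s :=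
  (((tendsto_hfun_atTop hν).eventually_le_const hs).and (eventually_gt_atTop 0)).exists.imp
    fun _ h => ⟨h.2, h.1⟩

end hfun

section hinv

variable {d : ℕ} {ν : ℝ → ℝ}

lemma hinv_nonneg (s : ℝ) : 0 ≤ hinv d ν s :=
  Real.sInf_nonneg fun _ hr => hr.1.le

lemma hinv_le {r s : ℝ} (hr : 0 < r) (h : hfun d ν r ≤ s) : hinv d ν s ≤ r :=
  csInf_le ⟨0, fun _ hx => hx.1.le⟩ ⟨hr, h⟩

lemma lt_hfun_of_lt_hinv {r s : ℝ} (hr : 0 < r) (h : r < hinv d ν s) : s < hfun d ν r :=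
  lt_of_not_ge fun h' => h.not_ge (hinv_le hr h')

lemma hfun_le_of_hinv_lt (hν : NuOK d ν) {r s : ℝ} (hs : 0 < s) (h : hinv d ν s < r) :
    hfun d ν r ≤ s := by
  obtain ⟨r', ⟨hr'0, hr's⟩, hr'r⟩ :=
    (csInf_lt_iff ⟨0, fun _ hx => hx.1.le⟩ (exists_hfun_le hν hs)).1 h
  exact (antitoneOn_hfun hν hr'0 (hr'0.trans hr'r) hr'r.le).trans hr's

lemma le_hinv_of_lt_hfun (hν : NuOK d ν) {r s : ℝ} (hs : 0 < s) (h : s < hfun d ν r) :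
    r ≤ hinv d ν s :=
  le_of_not_gt fun h' => (hfun_le_of_hinv_lt hν hs h').not_gt h

lemma hinv_pos (hν : NuOK d ν) {s : ℝ} (hs : 0 < s) : 0 < hinv d ν s := by
  obtain ⟨ε, hε, hsub⟩ :=
    mem_nhdsGT_iff_exists_Ioo_subset.1 (hν.2.2.2.2.eventually_ge_atTop (s + 1))
  have hε0 : (0 : ℝ) < ε := hε
  refine (hinv_nonneg s).lt_of_ne' fun h0 => ?_
  have hlt : hinv d ν s < ε / 2 := by rw [h0]; positivity
  have hge : s + 1 ≤ hfun d ν (ε / 2) := hsub ⟨by positivity, by linarith⟩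
  linarith [hfun_le_of_hinv_lt hν hs hlt]

lemma antitoneOn_hinv (hν : NuOK d ν) : AntitoneOn (hinv d ν) (Ioi 0) := fun _ hs _ _ hss' =>
  csInf_le_csInf ⟨0, fun _ hx => hx.1.le⟩ (exists_hfun_le hν hs)
    fun _ hr => ⟨hr.1, hr.2.trans hss'⟩

lemma monotoneOn_hinv_one_div (hν : NuOK d ν) :
    MonotoneOn (fun u => hinv d ν (1 / u)) (Ioi 0) := fun _ hu _ hv huv =>
  antitoneOn_hinv hν (mem_Ioi.2 (one_div_pos.2 (mem_Ioi.1 hv)))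
    (mem_Ioi.2 (one_div_pos.2 (mem_Ioi.1 hu))) (one_div_le_one_div_of_le hu huv)

lemma hinv_one_div_le (hν : NuOK d ν) {u t : ℝ} (hu : 0 < u) (hut : u ≤ t) :
    hinv d ν (1 / u) ≤ (u / t) ^ ((1 : ℝ) / 2) * hinv d ν (1 / t) := by
  have ht : 0 < t := hu.trans_le hut
  set lam := (u / t) ^ ((1 : ℝ) / 2)
  have hlam : 0 < lam := by positivity
  have hlam1 : lam ≤ 1 := rpow_le_one (by positivity) (div_le_one_of_le₀ hut ht.le) (by norm_num)
  have hlam2 : lam ^ 2 = u / t := by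
    rw [← rpow_natCast, ← rpow_mul (by positivity)]; norm_num
  suffices h : ∀ r, hinv d ν (1 / t) < r → hinv d ν (1 / u) ≤ lam * r by
    rw [← div_le_iff₀' hlam]
    exact le_of_forall_gt_imp_ge_of_dense fun r hr => (div_le_iff₀' hlam).2 (h r hr)
  intro r hr
  have hr0 : 0 < r := (hinv_nonneg _).trans_lt hr
  refine hinv_le (by positivity) ?_
  calc hfun d ν (lam * r) ≤ (lam ^ 2)⁻¹ * hfun d ν r := hfun_mul_le hν hlam hlam1 hr0
    _ ≤ (lam ^ 2)⁻¹ * (1 / t) := by gcongr; exact hfun_le_of_hinv_lt hν (by positivity) hr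
    _ = 1 / u := by rw [hlam2]; field_simp

lemma rpow_mul_min_hinv_le_hinv {ah Ch : ℝ} (hν : NuOK d ν) (hls : WLSC d ν ah Ch)
    {u t : ℝ} (hu : 0 < u) (hut : u ≤ t) :
    (u / (Ch * t)) ^ (1 / ah) * min (hinv d ν (1 / t)) 1 ≤ hinv d ν (1 / u) := by
  obtain ⟨⟨hah, -⟩, hCh, hscale⟩ := hls
  have ht : 0 < t := hu.trans_le hut
  set lam := (u / (Ch * t)) ^ (1 / ah)
  have hlam : 0 < lam := by positivity
  have hlam1 : lam ≤ 1 :=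
    rpow_le_one (by positivity) ((div_le_one (by positivity)).2 (by nlinarith)) (by positivity)
  have hlam_ah : Ch * lam ^ ah = u / t := by
    rw [← rpow_mul (by positivity), one_div_mul_cancel hah.ne', rpow_one]; field_simp
  suffices h : ∀ r, 0 < r → r < min (hinv d ν (1 / t)) 1 → lam * r ≤ hinv d ν (1 / u) by
    refine le_of_forall_lt_imp_le_of_dense fun a ha => ?_
    rcases le_or_gt a 0 with ha0 | ha0
    · exact ha0.trans (hinv_nonneg _)
    · simpa [mul_div_cancel₀ _ hlam.ne'] using
        h (a / lam) (by positivity) ((div_lt_iff₀' hlam).2 ha)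
  intro r hr hrm
  refine le_hinv_of_lt_hfun hν (by positivity) ?_
  have h1 : 1 / t < hfun d ν r := lt_hfun_of_lt_hinv hr (hrm.trans_le (min_le_left _ _))
  have h2 : hfun d ν r ≤ u / t * hfun d ν (lam * r) :=
    hlam_ah ▸ hscale lam r hlam hlam1 hr (hrm.le.trans (min_le_right _ _))
  calc 1 / u = (u / t)⁻¹ * (1 / t) := by field_simp
    _ < (u / t)⁻¹ * (u / t * hfun d ν (lam * r)) := by gcongr; exact h1.trans_le h2
    _ = hfun d ν (lam * r) := by field_simp

lemma exists_mul_rpow_mul_hinv_le_hinv {ah Ch : ℝ} (hν : NuOK d ν) (hls : WLSC d ν ah Ch)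
    (T : ℝ) : ∃ c, 0 < c ∧ c ≤ 1 ∧ ∀ t ∈ Ioc 0 T, ∀ u ∈ Ioc 0 t,
      c * ((u / t) ^ (1 / ah) * hinv d ν (1 / t)) ≤ hinv d ν (1 / u) := by
  have hah : 0 < ah := hls.1.1
  have hCh : 1 ≤ Ch := hls.2.1
  set M := max (hinv d ν (1 / T)) 1
  have hM : 1 ≤ M := le_max_right _ _
  have hChpow : Ch ^ (-(1 / ah)) ≤ 1 :=
    rpow_le_one_of_one_le_of_nonpos hCh (neg_nonpos.2 (by positivity))
  refine ⟨Ch ^ (-(1 / ah)) / M, by positivity, (div_le_one (by positivity)).2 (hChpow.trans hM),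
    ?_⟩
  rintro t ⟨ht, htT⟩ u ⟨hu, hut⟩
  have hAt : 0 < hinv d ν (1 / t) := hinv_pos hν (by positivity)
  have hAtM : hinv d ν (1 / t) ≤ M :=
    (antitoneOn_hinv hν (mem_Ioi.2 (one_div_pos.2 (ht.trans_le htT))) (mem_Ioi.2 (one_div_pos.2 ht))
      (one_div_le_one_div_of_le ht htT)).trans (le_max_left _ _)
  have hsplit : (u / (Ch * t)) ^ (1 / ah) = Ch ^ (-(1 / ah)) * (u / t) ^ (1 / ah) := by
    rw [show u / (Ch * t) = Ch⁻¹ * (u / t) by field_simp, mul_rpow (by positivity) (by positivity),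
      inv_rpow (by positivity), rpow_neg (by positivity)]
  calc Ch ^ (-(1 / ah)) / M * ((u / t) ^ (1 / ah) * hinv d ν (1 / t))
      = (u / (Ch * t)) ^ (1 / ah) * (hinv d ν (1 / t) / M) := by rw [hsplit]; ring
    _ ≤ (u / (Ch * t)) ^ (1 / ah) * min (hinv d ν (1 / t)) 1 := by
        gcongr
        exact le_min (div_le_self hAt.le hM) ((div_le_one (by positivity)).2 hAtM)
    _ ≤ hinv d ν (1 / u) := rpow_mul_min_hinv_le_hinv hν hls hu hut

end hinv

section Theta

variable {d : ℕ} {ν : ℝ → ℝ}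

lemma exists_hinv_rpow_le {ah Ch : ℝ} (hν : NuOK d ν) (hls : WLSC d ν ah Ch) (T γ : ℝ) :
    ∃ C > 0, ∀ t ∈ Ioc 0 T, ∀ u ∈ Ioc 0 t,
      hinv d ν (1 / u) ^ γ ≤ C * ((u / t) ^ min (γ / 2) (γ / ah) * hinv d ν (1 / t) ^ γ) := by
  obtain ⟨c, hc, -, hlower⟩ := exists_mul_rpow_mul_hinv_le_hinv hν hls T
  obtain ⟨⟨hah, hah2⟩, -, -⟩ := hls
  refine ⟨max 1 (c ^ γ), by positivity, ?_⟩
  rintro t ⟨ht, htT⟩ u ⟨hu, hut⟩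
  have hAt : 0 < hinv d ν (1 / t) := hinv_pos hν (by positivity)
  have hAu : 0 < hinv d ν (1 / u) := hinv_pos hν (by positivity)
  have hut' : 0 < u / t := by positivity
  rcases le_or_gt 0 γ with hγ | hγ
  · rw [min_eq_left (div_le_div_of_nonneg_left hγ hah hah2)]
    calc hinv d ν (1 / u) ^ γ ≤ ((u / t) ^ ((1 : ℝ) / 2) * hinv d ν (1 / t)) ^ γ :=
          rpow_le_rpow hAu.le (hinv_one_div_le hν hu hut) hγ
      _ = (u / t) ^ (γ / 2) * hinv d ν (1 / t) ^ γ := by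
          rw [mul_rpow (by positivity) hAt.le, ← rpow_mul hut'.le]; ring_nf
      _ ≤ _ := le_mul_of_one_le_left (by positivity) (le_max_left _ _)
  · rw [min_eq_right ((div_le_div_iff₀ hah two_pos).2 (by nlinarith))]
    calc hinv d ν (1 / u) ^ γ ≤ (c * ((u / t) ^ (1 / ah) * hinv d ν (1 / t))) ^ γ :=
          rpow_le_rpow_of_nonpos (by positivity) (hlower t ⟨ht, htT⟩ u ⟨hu, hut⟩) hγ.le
      _ = c ^ γ * ((u / t) ^ (γ / ah) * hinv d ν (1 / t) ^ γ) := by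
          rw [mul_rpow hc.le (by positivity), mul_rpow (by positivity) hAt.le,
            ← rpow_mul hut'.le]
          ring_nf
      _ ≤ _ := by gcongr; exact le_max_right _ _

lemma one_le_Theta (d : ℕ) (ν : ℝ → ℝ) (t : ℝ) : 1 ≤ Theta d ν t :=
  le_add_of_nonneg_right (Real.log_nonneg (le_max_left _ _))

lemma log_max_one_inv_le {a b c : ℝ} (ha : 0 < a) (hc : 0 < c) (hc1 : c ≤ 1) (h : c * a ≤ b) :
    log (max 1 b⁻¹) ≤ log c⁻¹ + log (max 1 a⁻¹) := by
  have hb : 0 < b := (mul_pos hc ha).trans_le h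
  have hmax : max 1 b⁻¹ ≤ c⁻¹ * max 1 a⁻¹ := by
    refine max_le (one_le_mul_of_one_le_of_one_le ((one_le_inv₀ hc).2 hc1) (le_max_left _ _)) ?_
    calc b⁻¹ ≤ (c * a)⁻¹ := inv_anti₀ (mul_pos hc ha) h
      _ = c⁻¹ * a⁻¹ := mul_inv c a
      _ ≤ c⁻¹ * max 1 a⁻¹ := by gcongr; exact le_max_right _ _
  calc log (max 1 b⁻¹) ≤ log (c⁻¹ * max 1 a⁻¹) :=
        Real.log_le_log (by positivity) hmax
    _ = _ := Real.log_mul (by positivity) (by positivity)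

lemma exists_Theta_le {ah Ch : ℝ} (hν : NuOK d ν) (hls : WLSC d ν ah Ch) (T : ℝ) {ε : ℝ}
    (hε : 0 < ε) :
    ∃ C > 0, ∀ t ∈ Ioc 0 T, ∀ u ∈ Ioc 0 t, Theta d ν u ≤ C * ((t / u) ^ ε * Theta d ν t) := by
  obtain ⟨c, hc, hc1, hlower⟩ := exists_mul_rpow_mul_hinv_le_hinv hν hls T
  have hah : 0 < ah := hls.1.1
  have hA : 0 ≤ log c⁻¹ := Real.log_nonneg ((one_le_inv₀ hc).2 hc1)
  refine ⟨1 + log c⁻¹ + 1 / (ah * ε), by positivity, ?_⟩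
  rintro t ⟨ht, htT⟩ u ⟨hu, hut⟩
  have hs : 0 < (u / t) ^ (1 / ah) := by positivity
  have hs1 : (u / t) ^ (1 / ah) ≤ 1 :=
    rpow_le_one (by positivity) (div_le_one_of_le₀ hut ht.le) (by positivity)
  have hlog := log_max_one_inv_le (hinv_pos hν (one_div_pos.2 ht)) (mul_pos hc hs)
    (mul_le_one₀ hc1 hs.le hs1) ((mul_assoc _ _ _).trans_le (hlower t ⟨ht, htT⟩ u ⟨hu, hut⟩))
  have hsplit : log (c * (u / t) ^ (1 / ah))⁻¹ = log c⁻¹ + 1 / ah * log (t / u) := by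
    rw [mul_inv, Real.log_mul (by positivity) (by positivity), ← inv_rpow (by positivity), inv_div,
      Real.log_rpow (by positivity)]
  have hL : log (t / u) ≤ (t / u) ^ ε / ε := Real.log_le_rpow_div (by positivity) hε
  have hx : 1 ≤ (t / u) ^ ε := one_le_rpow ((one_le_div hu).2 hut) hε.le
  have hΘ := one_le_Theta d ν t
  calc Theta d ν u ≤ Theta d ν t + log c⁻¹ + 1 / ah * log (t / u) := by
        unfold Theta at *; linarith
    _ ≤ Theta d ν t + log c⁻¹ + 1 / ah * ((t / u) ^ ε / ε) := by gcongr
    _ ≤ _ := by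
        have hxΘ : 1 ≤ (t / u) ^ ε * Theta d ν t := one_le_mul_of_one_le_of_one_le hx hΘ
        have hB : 0 ≤ 1 / (ah * ε) := by positivity
        have hrw : 1 / ah * ((t / u) ^ ε / ε) = 1 / (ah * ε) * (t / u) ^ ε := by ring
        nlinarith [mul_nonneg hA (sub_nonneg.2 hxΘ), mul_nonneg (mul_nonneg hB
          (zero_le_one.trans hx)) (sub_nonneg.2 hΘ), mul_nonneg (zero_le_one.trans hΘ)
          (sub_nonneg.2 hx)]

end Theta

section Convolution

variable {p q t : ℝ}

lemma rpow_le_two_rpow_abs_mul_rpow {s : ℝ} (ht : 0 < t) (hs : t / 2 ≤ s) (hst : s ≤ t) :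
    s ^ q ≤ 2 ^ |q| * t ^ q := by
  rcases le_or_gt 0 q with hq | hq
  · rw [abs_of_nonneg hq]
    calc s ^ q ≤ t ^ q := rpow_le_rpow (by linarith) hst hq
      _ ≤ 2 ^ q * t ^ q := le_mul_of_one_le_left (by positivity) (one_le_rpow one_le_two hq)
  · rw [abs_of_neg hq]
    calc s ^ q ≤ (t / 2) ^ q := rpow_le_rpow_of_nonpos (by positivity) hs hq.le
      _ = 2 ^ (-q) * t ^ q := by
          rw [div_rpow ht.le zero_le_two, rpow_neg zero_le_two, div_eq_inv_mul]

lemma integrableOn_rpow_Ioo (hp : -1 < p) (ht : 0 < t) :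
    IntegrableOn (fun u => u ^ p) (Ioo 0 t) :=
  (intervalIntegrable_iff_integrableOn_Ioo_of_le ht.le).1
    (intervalIntegral.intervalIntegrable_rpow' hp)

lemma integrableOn_sub_rpow_Ioo (hq : -1 < q) (ht : 0 < t) :
    IntegrableOn (fun u => (t - u) ^ q) (Ioo 0 t) := by
  refine (intervalIntegrable_iff_integrableOn_Ioo_of_le ht.le).1 ?_
  simpa using
    ((intervalIntegral.intervalIntegrable_rpow' (a := 0) (b := t) hq).comp_sub_left t).symm

lemma setIntegral_rpow_Ioo (hp : -1 < p) (ht : 0 < t) :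
    ∫ u in Ioo 0 t, u ^ p = t ^ (p + 1) / (p + 1) := by
  rw [← integral_Ioc_eq_integral_Ioo, ← intervalIntegral.integral_of_le ht.le,
    integral_rpow (Or.inl hp), zero_rpow (by linarith), sub_zero]

lemma setIntegral_sub_rpow_Ioo (hq : -1 < q) (ht : 0 < t) :
    ∫ u in Ioo 0 t, (t - u) ^ q = t ^ (q + 1) / (q + 1) := by
  rw [← integral_Ioc_eq_integral_Ioo, ← intervalIntegral.integral_of_le ht.le,
    intervalIntegral.integral_comp_sub_left (fun x => x ^ q), sub_self, sub_zero,
    integral_rpow (Or.inl hq), zero_rpow (by linarith), sub_zero]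

/-- On either half of `(0, t)` one of the two factors is at most `2^|·|` times a power of `t`. -/
theorem integral_rpow_mul_sub_rpow_le (hp : -1 < p) (hq : -1 < q) (ht : 0 < t) :
    IntegrableOn (fun u => u ^ p * (t - u) ^ q) (Ioo 0 t) ∧
      ∫ u in Ioo 0 t, u ^ p * (t - u) ^ q ≤
        (2 ^ |q| / (p + 1) + 2 ^ |p| / (q + 1)) * t ^ (p + q + 1) := by
  set g : ℝ → ℝ := fun u => 2 ^ |q| * t ^ q * u ^ p + 2 ^ |p| * t ^ p * (t - u) ^ q
  have hg : IntegrableOn g (Ioo 0 t) :=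
    ((integrableOn_rpow_Ioo hp ht).const_mul _).add ((integrableOn_sub_rpow_Ioo hq ht).const_mul _)
  have hnonneg : ∀ u ∈ Ioo 0 t, 0 ≤ u ^ p * (t - u) ^ q := fun u hu =>
    mul_nonneg (rpow_nonneg hu.1.le _) (rpow_nonneg (by linarith [hu.2]) _)
  have hle : ∀ u ∈ Ioo 0 t, u ^ p * (t - u) ^ q ≤ g u := by
    rintro u ⟨hu, hut⟩
    have hA : 0 ≤ 2 ^ |q| * t ^ q * u ^ p := by positivity
    have hB : 0 ≤ 2 ^ |p| * t ^ p * (t - u) ^ q := by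
      have : 0 ≤ t - u := by linarith
      positivity
    rcases le_total u (t / 2) with h | h
    · have := rpow_le_two_rpow_abs_mul_rpow (q := q) ht (s := t - u) (by linarith) (by linarith)
      calc u ^ p * (t - u) ^ q ≤ u ^ p * (2 ^ |q| * t ^ q) := by gcongr
        _ ≤ g u := by simp only [g]; linarith
    · have := rpow_le_two_rpow_abs_mul_rpow (q := p) ht h hut.le
      calc u ^ p * (t - u) ^ q ≤ 2 ^ |p| * t ^ p * (t - u) ^ q := by
            have : 0 ≤ t - u := by linarith
            gcongr
        _ ≤ g u := by simp only [g]; linarith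
  have hint : IntegrableOn (fun u => u ^ p * (t - u) ^ q) (Ioo 0 t) :=
    hg.mono' (by fun_prop) ((ae_restrict_iff' measurableSet_Ioo).2 (ae_of_all _ fun u hu => by
      rw [Real.norm_eq_abs, abs_of_nonneg (hnonneg u hu)]; exact hle u hu))
  refine ⟨hint, (setIntegral_mono_on hint hg measurableSet_Ioo hle).trans_eq ?_⟩
  rw [integral_add ((integrableOn_rpow_Ioo hp ht).const_mul _)
      ((integrableOn_sub_rpow_Ioo hq ht).const_mul _), integral_const_mul, integral_const_mul,
    setIntegral_rpow_Ioo hp ht, setIntegral_sub_rpow_Ioo hq ht]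
  calc 2 ^ |q| * t ^ q * (t ^ (p + 1) / (p + 1)) + 2 ^ |p| * t ^ p * (t ^ (q + 1) / (q + 1))
      = 2 ^ |q| / (p + 1) * (t ^ q * t ^ (p + 1)) + 2 ^ |p| / (q + 1) * (t ^ p * t ^ (q + 1)) := by
        ring
    _ = _ := by
        rw [← rpow_add ht, ← rpow_add ht, show q + (p + 1) = p + q + 1 by ring,
          show p + (q + 1) = p + q + 1 by ring]
        ring

theorem integral_mul_comp_sub_le {f g : ℝ → ℝ} {A B : ℝ} (hp : -1 < p) (hq : -1 < q)
    (ht : 0 < t)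
    (hmeas : AEStronglyMeasurable (fun u => f u * g (t - u)) (volume.restrict (Ioo 0 t)))
    (hf : ∀ w ∈ Ioo 0 t, 0 ≤ f w ∧ f w ≤ A * w ^ p)
    (hg : ∀ w ∈ Ioo 0 t, 0 ≤ g w ∧ g w ≤ B * w ^ q) :
    IntegrableOn (fun u => f u * g (t - u)) (Ioo 0 t) ∧
      ∫ u in Ioo 0 t, f u * g (t - u) ≤
        A * B * ((2 ^ |q| / (p + 1) + 2 ^ |p| / (q + 1)) * t ^ (p + q + 1)) := by
  obtain ⟨hint, hI⟩ := integral_rpow_mul_sub_rpow_le hp hq ht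
  have hsub : ∀ u ∈ Ioo 0 t, t - u ∈ Ioo 0 t := fun u hu => ⟨by linarith [hu.2], by linarith [hu.1]⟩
  have hle : ∀ u ∈ Ioo 0 t, f u * g (t - u) ≤ A * B * (u ^ p * (t - u) ^ q) := fun u hu =>
    calc f u * g (t - u) ≤ A * u ^ p * (B * (t - u) ^ q) :=
          mul_le_mul (hf u hu).2 (hg _ (hsub u hu)).2 (hg _ (hsub u hu)).1
            ((hf u hu).1.trans (hf u hu).2)
      _ = A * B * (u ^ p * (t - u) ^ q) := by ring
  have hmid : t / 2 ∈ Ioo 0 t := ⟨by positivity, by linarith⟩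
  have hAB : 0 ≤ A * B :=
    mul_nonneg (nonneg_of_mul_nonneg_left ((hf _ hmid).1.trans (hf _ hmid).2) (by positivity))
      (nonneg_of_mul_nonneg_left ((hg _ hmid).1.trans (hg _ hmid).2) (by positivity))
  have hint' : IntegrableOn (fun u => f u * g (t - u)) (Ioo 0 t) :=
    (hint.const_mul (A * B)).mono' hmeas ((ae_restrict_iff' measurableSet_Ioo).2
      (ae_of_all _ fun u hu => by
        rw [Real.norm_eq_abs, abs_of_nonneg (mul_nonneg (hf u hu).1 (hg _ (hsub u hu)).1)]
        exact hle u hu))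
  refine ⟨hint', (setIntegral_mono_on hint' (hint.const_mul _) measurableSet_Ioo hle).trans ?_⟩
  rw [integral_const_mul]
  exact mul_le_mul_of_nonneg_left hI hAB

end Convolution

section thetaWeight

variable {d : ℕ} {ν : ℝ → ℝ}

def thetaWeight (d : ℕ) (ν : ℝ → ℝ) (l η γ w : ℝ) : ℝ :=
  Theta d ν w ^ l * w ^ (-η) * hinv d ν (1 / w) ^ γ

lemma thetaWeight_nonneg {l η γ w : ℝ} (hw : 0 ≤ w) : 0 ≤ thetaWeight d ν l η γ w :=
  mul_nonneg (mul_nonneg (rpow_nonneg (zero_le_one.trans (one_le_Theta d ν w)) _)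
    (rpow_nonneg hw _)) (rpow_nonneg (hinv_nonneg _) _)

lemma aemeasurable_thetaWeight_comp {μ : Measure ℝ} {φ : ℝ → ℝ} (l η γ : ℝ)
    (hφ : AEMeasurable φ μ) (hh : AEMeasurable (fun u => hinv d ν (1 / φ u)) μ) :
    AEMeasurable (fun u => thetaWeight d ν l η γ (φ u)) μ := by
  simp only [thetaWeight, Theta]
  fun_prop

lemma div_rpow_mul_rpow_mul_div_rpow {t w : ℝ} (ht : 0 < t) (hw : 0 < w) (a b c : ℝ) :
    (t / w) ^ a * w ^ b * (w / t) ^ c = t ^ (a - c) * w ^ (b + c - a) := by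
  rw [div_rpow ht.le hw.le, div_rpow hw.le ht.le, rpow_sub ht, rpow_sub hw, rpow_add hw]
  field_simp

lemma exists_thetaWeight_le {ah Ch : ℝ} (hν : NuOK d ν) (hls : WLSC d ν ah Ch) (T : ℝ)
    {l η γ : ℝ} (hl : 0 ≤ l) (hγ : 0 < min (γ / 2) (γ / ah) + 1 - η) :
    ∃ p > -1, ∃ C > 0, ∀ t ∈ Ioc 0 T, ∀ w ∈ Ioc 0 t,
      thetaWeight d ν l η γ w ≤
        C * (Theta d ν t ^ l * hinv d ν (1 / t) ^ γ * t ^ (-η - p)) * w ^ p := by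
  set m := min (γ / 2) (γ / ah)
  obtain ⟨ε, hε, hεl⟩ := exists_pos_mul_lt hγ l
  obtain ⟨CΘ, hCΘ, hΘ⟩ := exists_Theta_le hν hls T hε
  obtain ⟨Ch', hCh', hh⟩ := exists_hinv_rpow_le hν hls T γ
  refine ⟨m - η - ε * l, by linarith, CΘ ^ l * Ch', by positivity, ?_⟩
  rintro t ht w hw
  have ht0 : 0 < t := ht.1
  have hw0 : 0 < w := hw.1
  have hΘt : 0 ≤ Theta d ν t := zero_le_one.trans (one_le_Theta d ν t)
  have hΘw : Theta d ν w ^ l ≤ CΘ ^ l * ((t / w) ^ (ε * l) * Theta d ν t ^ l) :=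
    calc Theta d ν w ^ l ≤ (CΘ * ((t / w) ^ ε * Theta d ν t)) ^ l :=
          rpow_le_rpow (zero_le_one.trans (one_le_Theta d ν w)) (hΘ t ht w hw) hl
      _ = _ := by
          rw [mul_rpow hCΘ.le (by positivity), mul_rpow (by positivity) hΘt,
            ← rpow_mul (by positivity)]
  calc thetaWeight d ν l η γ w
      ≤ CΘ ^ l * ((t / w) ^ (ε * l) * Theta d ν t ^ l) * w ^ (-η) *
          (Ch' * ((w / t) ^ m * hinv d ν (1 / t) ^ γ)) :=
        mul_le_mul (mul_le_mul_of_nonneg_right hΘw (by positivity)) (hh t ht w hw)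
          (rpow_nonneg (hinv_nonneg _) _) (by positivity)
    _ = CΘ ^ l * Ch' * (Theta d ν t ^ l * hinv d ν (1 / t) ^ γ) *
          ((t / w) ^ (ε * l) * w ^ (-η) * (w / t) ^ m) := by ring
    _ = _ := by
        rw [div_rpow_mul_rpow_mul_div_rpow ht0 hw0, show ε * l - m = -η - (m - η - ε * l) by ring,
          show -η + m - ε * l = m - η - ε * l by ring]
        ring

lemma aestronglyMeasurable_thetaWeight_mul (hν : NuOK d ν) (l η γ k θ β t : ℝ) :
    AEStronglyMeasurable (fun u => thetaWeight d ν l η γ u * thetaWeight d ν k θ β (t - u))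
      (volume.restrict (Ioo 0 t)) := by
  have hmono := monotoneOn_hinv_one_div hν
  refine ((aemeasurable_thetaWeight_comp l η γ aemeasurable_id ?_).mul
    (aemeasurable_thetaWeight_comp k θ β (by fun_prop) ?_)).aestronglyMeasurable
  · exact aemeasurable_restrict_of_monotoneOn measurableSet_Ioo (hmono.mono Ioo_subset_Ioi_self)
  · exact aemeasurable_restrict_of_antitoneOn measurableSet_Ioo fun a ha b hb hab =>
      hmono (mem_Ioi.2 (sub_pos.2 hb.2)) (mem_Ioi.2 (sub_pos.2 ha.2)) (by linarith)

lemma exists_integral_thetaWeight_mul_le {ah Ch : ℝ} (hν : NuOK d ν) (hls : WLSC d ν ah Ch)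
    (T : ℝ) {k l θ η β γ : ℝ} (hk : 0 ≤ k) (hl : 0 ≤ l)
    (hβ : 0 < min (β / 2) (β / ah) + 1 - θ) (hγ : 0 < min (γ / 2) (γ / ah) + 1 - η) :
    ∃ C > 0, ∀ t ∈ Ioc 0 T,
      IntegrableOn (fun u => thetaWeight d ν l η γ u * thetaWeight d ν k θ β (t - u)) (Ioo 0 t) ∧
      ∫ u in Ioo 0 t, thetaWeight d ν l η γ u * thetaWeight d ν k θ β (t - u) ≤
        C * Theta d ν t ^ (l + k) * t ^ (1 - η - θ) * hinv d ν (1 / t) ^ (γ + β) := by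
  obtain ⟨p, hp, C₁, hC₁, h₁⟩ := exists_thetaWeight_le hν hls T hl hγ
  obtain ⟨q, hq, C₂, hC₂, h₂⟩ := exists_thetaWeight_le hν hls T hk hβ
  refine ⟨C₁ * C₂ * (2 ^ |q| / (p + 1) + 2 ^ |p| / (q + 1)), by
    have : 0 < p + 1 := by linarith
    have : 0 < q + 1 := by linarith
    positivity, fun t ht => ?_⟩
  have ht0 : 0 < t := ht.1
  have hΘ : 0 < Theta d ν t := zero_lt_one.trans_le (one_le_Theta d ν t)
  have hA : 0 < hinv d ν (1 / t) := hinv_pos hν (by positivity)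
  obtain ⟨hint, hI⟩ := integral_mul_comp_sub_le hp hq ht0
    (aestronglyMeasurable_thetaWeight_mul hν l η γ k θ β t)
    (fun w hw => ⟨thetaWeight_nonneg hw.1.le, h₁ t ht w (Ioo_subset_Ioc_self hw)⟩)
    (fun w hw => ⟨thetaWeight_nonneg hw.1.le, h₂ t ht w (Ioo_subset_Ioc_self hw)⟩)
  have ht_exp : t ^ (1 - η - θ) = t ^ (-η - p) * t ^ (-θ - q) * t ^ (p + q + 1) := by
    rw [← rpow_add ht0, ← rpow_add ht0]; ring_nf
  refine ⟨hint, hI.trans_eq ?_⟩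
  rw [rpow_add hΘ, rpow_add hA, ht_exp]
  ring

end thetaWeight

theorem statement_19_general
    (d : ℕ) (ν : ℝ → ℝ) (ah Ch : ℝ)
    (hν : NuOK d ν) (hls : WLSC d ν ah Ch)
    (k l θ η β γ : ℝ) (hk : 0 ≤ k) (hl : 0 ≤ l)
    (hβ : 0 < min (β / 2) (β / ah) + 1 - θ)
    (hγ : 0 < min (γ / 2) (γ / ah) + 1 - η) :
    ∀ T > (0 : ℝ), ∃ c > (0 : ℝ),
      (∀ t ∈ Ioc (0 : ℝ) T,
        IntegrableOn (fun u : ℝ =>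
            Theta d ν u ^ l * u ^ (-η) * hinv d ν (1 / u) ^ γ *
              (Theta d ν (t - u) ^ k * (t - u) ^ (-θ) * hinv d ν (1 / (t - u)) ^ β))
          (Ioo 0 t) ∧
        (∫ u in Ioo (0 : ℝ) t,
            Theta d ν u ^ l * u ^ (-η) * hinv d ν (1 / u) ^ γ *
              (Theta d ν (t - u) ^ k * (t - u) ^ (-θ) * hinv d ν (1 / (t - u)) ^ β)) ≤
          c * Theta d ν t ^ (l + k) * t ^ (1 - η - θ) * hinv d ν (1 / t) ^ (γ + β)) ∧
      (∀ t ∈ Ioc (0 : ℝ) T, Theta d ν (t / 2) ≤ c * Theta d ν t) := by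
  intro T _
  obtain ⟨C, hC, hint⟩ := exists_integral_thetaWeight_mul_le hν hls T hk hl hβ hγ
  obtain ⟨C', hC', hΘ⟩ := exists_Theta_le hν hls T zero_lt_one
  refine ⟨max C (2 * C'), lt_max_of_lt_left hC, fun t ht => ?_, fun t ht => ?_⟩
  · obtain ⟨hi, hle⟩ := hint t ht
    have ht0 : 0 < t := ht.1
    have hΘt : 0 ≤ Theta d ν t ^ (l + k) :=
      rpow_nonneg (zero_le_one.trans (one_le_Theta d ν t)) _
    have hAt : 0 ≤ hinv d ν (1 / t) ^ (γ + β) := rpow_nonneg (hinv_nonneg _) _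
    refine ⟨hi, hle.trans ?_⟩
    gcongr
    exact le_max_left C (2 * C')
  · obtain ⟨ht0, htT⟩ := ht
    have hmem : t / 2 ∈ Ioc 0 t := ⟨by positivity, by linarith⟩
    have hhalf := hΘ t ⟨ht0, htT⟩ (t / 2) hmem
    rw [div_div_cancel₀ ht0.ne', rpow_one] at hhalf
    calc Theta d ν (t / 2) ≤ 2 * C' * Theta d ν t := by linarith
      _ ≤ _ := by gcongr; exacts [zero_le_one.trans (one_le_Theta d ν t), le_max_right _ _]

/-- Lemma 6.2: a convolution-type inequality for `Θ` and `h⁻¹`. -/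
theorem statement_19
    (d : ℕ) (hd : 0 < d) (ν : ℝ → ℝ) (ah Ch : ℝ)
    (hν : NuOK d ν) (hls : WLSC d ν ah Ch)
    (k l θ η β γ : ℝ) (hk : 0 ≤ k) (hl : 0 ≤ l)
    (hβ : 0 < min (β / 2) (β / ah) + 1 - θ)
    (hγ : 0 < min (γ / 2) (γ / ah) + 1 - η) :
    ∀ T > (0 : ℝ), ∃ c > (0 : ℝ),
      (∀ t ∈ Ioc (0 : ℝ) T,
        IntegrableOn (fun u : ℝ =>
            Theta d ν u ^ l * u ^ (-η) * hinv d ν (1 / u) ^ γ *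
              (Theta d ν (t - u) ^ k * (t - u) ^ (-θ) * hinv d ν (1 / (t - u)) ^ β))
          (Ioo 0 t) ∧
        (∫ u in Ioo (0 : ℝ) t,
            Theta d ν u ^ l * u ^ (-η) * hinv d ν (1 / u) ^ γ *
              (Theta d ν (t - u) ^ k * (t - u) ^ (-θ) * hinv d ν (1 / (t - u)) ^ β)) ≤
          c * Theta d ν t ^ (l + k) * t ^ (1 - η - θ) * hinv d ν (1 / t) ^ (γ + β)) ∧
      (∀ t ∈ Ioc (0 : ℝ) T, Theta d ν (t / 2) ≤ c * Theta d ν t) :=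
  statement_19_general d ν ah Ch hν hls k l θ η β γ hk hl hβ hγ
end
end
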